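/- arXiv:hep-th/9409153 — 4 statements merged into one kernel-verified Lean document; each statement's English description precedes it below -/
import Mathlib

section
/- With B_s, B_1 and ψ_1 as defined, ψ_1 commutes with the tensor-product crystal operator f̃_1: for all b ∈ B_s × B_1, ψ_1(f̃_1 b) = f̃_1(ψ_1 b), where f̃_1 on a tensor product b_1 ⊗ b_2 acts on b_1 if φ_1(b_1) > ε_1(b_2) and on b_2 otherwise, with the convention ψ_1(0) = 0. -/
/-- `ψ₁ : B_s ⊗ B_1 → B_1 ⊗ B_s`, with `B_s = Fin (s+1)`, `B_1 = Bool` (`+ ↔ false`, `- ↔ true`). -/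
def psi1 (s : ℕ) : Fin (s + 1) × Bool → Bool × Fin (s + 1) := fun p =>
  match p with
  | (j, false) =>
      if _h : j.val = 0 then (false, j)
      else (true, ⟨j.val - 1, by have := j.isLt; omega⟩)
  | (j, true) =>
      if _h : j.val = s then (true, j)
      else (false, ⟨j.val + 1, by have := j.isLt; omega⟩)

/-- `f̃₁` on `B_s`: `j ↦ j+1` for `0 ≤ j ≤ s-1`, else `0`. -/
def ftS (s : ℕ) (j : Fin (s + 1)) : Option (Fin (s + 1)) :=
  if h : j.val < s then some ⟨j.val + 1, by omega⟩ else none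

/-- `f̃₁` on `B_1`: `+ ↦ -`, `- ↦ 0`. -/
def ftB : Bool → Option Bool
  | false => some true
  | true => none

/-- `φ₁` on `B_s`: `φ₁(j) = s - j`. -/
def phiS (s : ℕ) (j : Fin (s + 1)) : ℕ := s - j.val

/-- `ε₁` on `B_s`: `ε₁(j) = j`. -/
def epsS (s : ℕ) (j : Fin (s + 1)) : ℕ := j.val

/-- `φ₁` on `B_1`. -/
def phiB : Bool → ℕ
  | false => 1
  | true => 0

/-- `ε₁` on `B_1`. -/
def epsB : Bool → ℕ
  | false => 0
  | true => 1

/-- Tensor-product operator `f̃₁` on `B_s ⊗ B_1`. -/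
def ftSB (s : ℕ) (p : Fin (s + 1) × Bool) : Option (Fin (s + 1) × Bool) :=
  if phiS s p.1 > epsB p.2 then (ftS s p.1).map (fun j' => (j', p.2))
  else (ftB p.2).map (fun b' => (p.1, b'))

/-- Tensor-product operator `f̃₁` on `B_1 ⊗ B_s`. -/
def ftBS (s : ℕ) (p : Bool × Fin (s + 1)) : Option (Bool × Fin (s + 1)) :=
  if phiB p.1 > epsS s p.2 then (ftB p.1).map (fun b' => (b', p.2))
  else (ftS s p.2).map (fun j' => (p.1, j'))

/-!
Both sides can be computed in closed form. On `j ⊗ +` they both equal `- ⊗ j`; on `j ⊗ -` they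
both equal `+ ⊗ (j + 2)` when `j + 2 ≤ s` and `0` otherwise.
-/

section

variable {s : ℕ}

theorem map_psi1_ftSB_plus (j : Fin (s + 1)) :
    (ftSB s (j, false)).map (psi1 s) = some (true, j) := by
  by_cases hj : j.val < s
  · simp [ftSB, phiS, epsB, ftS, hj, psi1]
  · have hs : j.val = s := by omega
    simp [ftSB, phiS, epsB, ftB, psi1, hs]

theorem ftBS_psi1_plus (j : Fin (s + 1)) :
    ftBS s (psi1 s (j, false)) = some (true, j) := by
  by_cases hj : j.val = 0
  · simp [psi1, hj, ftBS, phiB, epsS, ftB]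
  · simp [psi1, hj, ftBS, phiB, epsS, ftS, Fin.ext_iff]
    omega

theorem map_psi1_ftSB_minus (j : Fin (s + 1)) :
    (ftSB s (j, true)).map (psi1 s) =
      if h : j.val + 1 < s then some (false, ⟨j.val + 2, by omega⟩) else none := by
  by_cases hj : j.val + 1 < s
  · have hphi : epsB true < phiS s j := by simp [phiS, epsB]; omega
    have hlt : j.val < s := by omega
    have hne : j.val + 1 ≠ s := by omega
    simp [ftSB, hphi, ftS, hlt, psi1, hne, hj]
  · simp [ftSB, phiS, epsB, ftB, hj]
    omega

theorem ftBS_psi1_minus (j : Fin (s + 1)) :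
    ftBS s (psi1 s (j, true)) =
      if h : j.val + 1 < s then some (false, ⟨j.val + 2, by omega⟩) else none := by
  by_cases hj : j.val = s <;> simp [psi1, hj, ftBS, phiB, epsS, ftS]

end

/-- `ψ₁` commutes with the tensor-product crystal operator `f̃₁`:
`ψ₁(f̃₁ b) = f̃₁(ψ₁ b)` for all `b ∈ B_s ⊗ B_1`, with the convention `ψ₁(0) = 0`. -/
theorem psi1_commutes_ft1 (s : ℕ) :
    ∀ p : Fin (s + 1) × Bool, (ftSB s p).map (psi1 s) = ftBS s (psi1 s p) := by
  rintro ⟨j, _ | _⟩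
  · rw [map_psi1_ftSB_plus, ftBS_psi1_plus]
  · rw [map_psi1_ftSB_minus, ftBS_psi1_minus]
end

section
/- With B_s, B_1 and ψ_1 as defined, ψ_1 commutes with the tensor-product crystal operator f̃_0: for all b ∈ B_s ⊗ B_1, ψ_1(f̃_0 b) = f̃_0(ψ_1 b), with the convention ψ_1(0) = 0. -/
/-- `f̃₀` on `B_s`: `j ↦ j-1` for `1 ≤ j ≤ s`, else `0`. -/
def ft0S (s : ℕ) (j : Fin (s + 1)) : Option (Fin (s + 1)) :=
  if h : 1 ≤ j.val then some ⟨j.val - 1, by omega⟩ else none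

/-- `f̃₀` on `B_1`: `- ↦ +`, `+ ↦ 0`. -/
def ft0B : Bool → Option Bool
  | true => some false
  | false => none

/-- `φ₀` on `B_s`: `φ₀(j) = j`. -/
def phi0S (s : ℕ) (j : Fin (s + 1)) : ℕ := j.val

/-- `ε₀` on `B_s`: `ε₀(j) = s - j`. -/
def eps0S (s : ℕ) (j : Fin (s + 1)) : ℕ := s - j.val

/-- `φ₀` on `B_1`. -/
def phi0B : Bool → ℕ
  | true => 1
  | false => 0

/-- `ε₀` on `B_1`. -/
def eps0B : Bool → ℕ
  | true => 0
  | false => 1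

/-- Tensor-product operator `f̃₀` on `B_s ⊗ B_1`. -/
def ft0SB (s : ℕ) (p : Fin (s + 1) × Bool) : Option (Fin (s + 1) × Bool) :=
  if phi0S s p.1 > eps0B p.2 then (ft0S s p.1).map (fun j' => (j', p.2))
  else (ft0B p.2).map (fun b' => (p.1, b'))

/-- Tensor-product operator `f̃₀` on `B_1 ⊗ B_s`. -/
def ft0BS (s : ℕ) (p : Bool × Fin (s + 1)) : Option (Bool × Fin (s + 1)) :=
  if phi0B p.1 > eps0S s p.2 then (ft0B p.1).map (fun b' => (b', p.2))
  else (ft0S s p.2).map (fun j' => (p.1, j'))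

/-- `ψ₁` commutes with the tensor-product crystal operator `f̃₀`:
`ψ₁(f̃₀ b) = f̃₀(ψ₁ b)` for all `b ∈ B_s ⊗ B_1`, with the convention `ψ₁(0) = 0`. -/
theorem psi1_commutes_ft0 (s : ℕ) :
    ∀ p : Fin (s + 1) × Bool, (ft0SB s p).map (psi1 s) = ft0BS s (psi1 s p) := by
  rintro ⟨j, b⟩
  rcases b with _ | _ <;>
  · simp only [psi1, ft0SB, ft0BS, ft0S, ft0B, phi0S, phi0B, eps0S, eps0B]
    split_ifs <;>
      simp_all only [Option.map_some, Option.map_none, Option.map_map, psi1] <;>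
      first
        | rfl
        | omega
        | (split_ifs <;> grind [Fin.ext_iff])
end

section
/- For the maps ψ_n : B_s × B_1^n → B_1^n × B_s defined by composing ψ_1 successively (ψ_n = (1_{n-1} × ψ_1) ∘ ... ∘ (1_1 × ψ_1 × 1_{n-2}) ∘ (ψ_1 × 1_{n-1})), the following compatibility holds for all 0 ≤ j ≤ s-1 and all b' ∈ B_1^n: ψ_{n+2}(j, -, +, b') = (+, -, ψ_n(j, b')), i.e. prepending the pair (-,+) on the input corresponds to prepending (+,-) on the output. -/
/-- `ψ_n : B_s × B_1^n → B_1^n × B_s`, obtained by successively applying `ψ₁` to move the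
`B_s`-component past each `B_1`-factor from left to right
(`ψ_n = (1_{n-1} × ψ₁) ∘ ⋯ ∘ (1_1 × ψ₁ × 1_{n-2}) ∘ (ψ₁ × 1_{n-1})`).
The `B_1^n`-component is modelled as a list of booleans. -/
def psiList (s : ℕ) : Fin (s + 1) → List Bool → List Bool × Fin (s + 1)
  | j, [] => ([], j)
  | j, b :: bs =>
      let p := psi1 s (j, b)
      let r := psiList s p.2 bs
      (p.1 :: r.1, r.2)

/-- Compatibility: for `0 ≤ j ≤ s-1` and any `b' ∈ B_1^n`,
`ψ_{n+2}(j, -, +, b') = (+, -, ψ_n(j, b'))`: prepending `(-,+)` on the input corresponds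
to prepending `(+,-)` on the output. -/
theorem psiList_prepend (s : ℕ) (j : Fin (s + 1)) (hj : j.val + 1 ≤ s) (bs : List Bool) :
    psiList s j (true :: false :: bs) =
      (false :: true :: (psiList s j bs).1, (psiList s j bs).2) := by
  have h1 : j.val ≠ s := by omega
  simp only [psiList, psi1, h1, dif_neg, not_false_iff]
  norm_num
end

section
/- The product ∏_{1 ≤ j < k ≤ n+1} (1 - z_k/(q^2 z_j))/(1 - z_k/z_j), evaluated at z_j = q^{-2(j-1)} z for 1 ≤ j ≤ n+1, equals ∏_{l=1}^{n+1} (1 - q^{-2l}) / (1 - q^{-2})^{n+1}. -/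
/-!
With `u = q⁻²` the specialised variables are `z_j = u^j z`, so the factor indexed by `j < k`
only depends on `d = k - j` and equals `(1 - u^(d+1)) / (1 - u^d)`. For fixed `k` these factors
telescope to `(1 - u^(k+1)) / (1 - u)`, and the product over `k` is the right-hand side.
-/

open Finset

lemma prod_range_div_of_ne_zero {G₀ : Type*} [CommGroupWithZero G₀] (f : ℕ → G₀) :
    ∀ n, (∀ i ≤ n, f i ≠ 0) → ∏ i ∈ range n, f (i + 1) / f i = f n / f 0
  | 0, hf => by rw [prod_range_zero, div_self (hf 0 le_rfl)]
  | n + 1, hf => by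
    rw [prod_range_succ, prod_range_div_of_ne_zero f n fun i hi => hf i (hi.trans n.le_succ),
      mul_comm, div_mul_div_cancel₀ (hf n n.le_succ)]

lemma prod_fin_filter_lt_eq_prod_range {M : Type*} [CommMonoid M] {m : ℕ} (k : Fin m)
    (g : ℕ → M) : ∏ j ∈ univ.filter (fun j => j < k), g j.val = ∏ j ∈ range k, g j := by
  rw [filter_gt_eq_Iio, ← Nat.Iio_eq_range, ← Fin.map_valEmbedding_Iio, prod_map]
  rfl

section

variable {K : Type*} [Field K]

lemma one_sub_geom_ratio_div {u c z : K} (hu : u ≠ 0) (hz : z ≠ 0) (huc : u * c = 1)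
    {j k : ℕ} (hjk : j ≤ k) :
    (1 - u ^ k * z / (c * (u ^ j * z))) / (1 - u ^ k * z / (u ^ j * z))
      = (1 - u ^ (k - j + 1)) / (1 - u ^ (k - j)) := by
  have hratio : u ^ k * z / (u ^ j * z) = u ^ (k - j) := by
    rw [mul_div_mul_right _ _ hz, pow_sub₀ _ hu hjk, div_eq_mul_inv]
  rw [mul_comm c, ← div_div, hratio, eq_inv_of_mul_eq_one_right huc, div_inv_eq_mul, ← pow_succ]

lemma prod_range_one_sub_pow_div (u : K) (k : ℕ) (hu : ∀ d ≤ k, 1 - u ^ (d + 1) ≠ 0) :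
    ∏ j ∈ range k, (1 - u ^ (k - j + 1)) / (1 - u ^ (k - j)) = (1 - u ^ (k + 1)) / (1 - u) := by
  have hreflect : ∀ j ∈ range k, (1 - u ^ (k - j + 1)) / (1 - u ^ (k - j))
      = (1 - u ^ (k - 1 - j + 1 + 1)) / (1 - u ^ (k - 1 - j + 1)) := by
    intro j hj
    rw [show k - 1 - j + 1 = k - j by have := mem_range.1 hj; omega]
  rw [prod_congr rfl hreflect,
    prod_range_reflect (fun d => (1 - u ^ (d + 1 + 1)) / (1 - u ^ (d + 1))),
    prod_range_div_of_ne_zero (fun d => 1 - u ^ (d + 1)) k hu,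
    zero_add, pow_one]

end

/-- The product `∏_{1 ≤ j < k ≤ n+1} (1 - z_k/(q² z_j))/(1 - z_k/z_j)` evaluated at
`z_j = q^{-2(j-1)} z` equals `∏_{l=1}^{n+1} (1 - q^{-2l}) / (1 - q^{-2})^{n+1}`
(independently of `z`).  Here `j, k` run over `Fin (n+1)` (0-based, so `z_j = q^{-2j} z`). -/
theorem specialized_product {K : Type*} [Field K] (q z : K) (n : ℕ)
    (hq : q ≠ 0) (hz : z ≠ 0) (h : ∀ l, 1 ≤ l → l ≤ n + 1 → q ^ (2 * l) ≠ 1) :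
    (∏ k : Fin (n + 1), ∏ j ∈ Finset.univ.filter (fun j => j < k),
        (1 - (q⁻¹ ^ (2 * k.val) * z) / (q ^ 2 * (q⁻¹ ^ (2 * j.val) * z)))
          / (1 - (q⁻¹ ^ (2 * k.val) * z) / (q⁻¹ ^ (2 * j.val) * z)))
      = (∏ l ∈ Finset.range (n + 1), (1 - q⁻¹ ^ (2 * (l + 1)))) / (1 - q⁻¹ ^ 2) ^ (n + 1) := by
  have hu : q⁻¹ ^ 2 ≠ 0 := pow_ne_zero _ (inv_ne_zero hq)
  have huq : q⁻¹ ^ 2 * q ^ 2 = 1 := by rw [inv_pow, inv_mul_cancel₀ (pow_ne_zero _ hq)]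
  have hpow : ∀ d ≤ n, 1 - (q⁻¹ ^ 2) ^ (d + 1) ≠ 0 := fun d hd => by
    rw [sub_ne_zero, ne_comm, ← pow_mul, inv_pow, inv_ne_one]
    exact h (d + 1) d.succ_pos (by omega)
  simp only [pow_mul]
  set u := q⁻¹ ^ 2
  calc _ = ∏ k : Fin (n + 1), ∏ j ∈ range k, (1 - u ^ (k - j + 1)) / (1 - u ^ (k - j)) := by
        refine prod_congr rfl fun k _ => ?_
        rw [← prod_fin_filter_lt_eq_prod_range k]
        exact prod_congr rfl fun j hj =>
          one_sub_geom_ratio_div hu hz huq (mem_filter.1 hj).2.le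
    _ = ∏ k : Fin (n + 1), (1 - u ^ (k.val + 1)) / (1 - u) :=
        prod_congr rfl fun k _ => prod_range_one_sub_pow_div u k fun d hd => hpow d (by omega)
    _ = _ := by
        rw [Fin.prod_univ_eq_prod_range (fun k => (1 - u ^ (k + 1)) / (1 - u)),
          prod_div_distrib, prod_const, card_range]
end
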